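/- arXiv:1811.05007 — 2 statements merged into one kernel-verified Lean document; each statement's English description precedes it below -/
import Mathlib

section
/- Suppose a crash-stop algorithm A satisfies a safety state property P that is not repairable through detours, and suppose every finite trace of the crash-recovery system is a subword (with matching first and last states) of some finite trace of A extendable to an infinite trace of A. Then the crash-recovery system satisfies P. -/
/-!
Suppose a trace `ρ` of `B` violates `P`. By safety it has a nonempty bad prefix `tB`, which
embeds as a subword into a trace `tA` of `A` starting in the same state. Extend `tA` to an
infinite trace `tA ++ v` of `A` and append the same `v` to `tB`: the result `tB ++ v` still
violates `P` and is a subword of `tA ++ v` with the same first state, so by detour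
irreparability `tA ++ v ∉ P`, contradicting that `A` satisfies `P`.
-/

/-- Concatenation of a finite word with an infinite word. -/
def catWord {A : Type*} (u : List A) (v : ℕ → A) : ℕ → A :=
  fun i => if h : i < u.length then u.get ⟨i, h⟩ else v (i - u.length)

/-- The finite prefix of length `n` of an infinite word. -/
def prefixOf {A : Type*} (w : ℕ → A) (n : ℕ) : List A :=
  List.ofFn (fun i : Fin n => w i)

/-- `P` is a safety property. -/
def IsSafety {A : Type*} (P : Set (ℕ → A)) : Prop :=
  ∀ w ∉ P, ∃ n : ℕ, ∀ v : ℕ → A, catWord (prefixOf w n) v ∉ P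

/-- Subword relation on infinite words. -/
def Subword {A : Type*} (u w : ℕ → A) : Prop :=
  ∃ f : ℕ → ℕ, StrictMono f ∧ ∀ i, u i = w (f i)

/-- `P` is not repairable through detours. -/
def DetourIrreparable {A : Type*} (P : Set (ℕ → A)) : Prop :=
  ∀ u w : ℕ → A, u ∉ P → u 0 = w 0 → Subword u w → w ∉ P

/-- Subword relation on finite words (via a strictly monotone re-indexing). -/
def FinSubword {A : Type*} (u t : List A) : Prop :=
  ∃ f : ℕ → ℕ, StrictMono f ∧ ∀ i < u.length, u[i]? = t[f i]?


section Words

variable {A : Type*}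

theorem catWord_apply_of_getElem?_eq {u : List A} {i : ℕ} {a : A} (h : u[i]? = some a)
    (v : ℕ → A) : catWord u v i = a := by
  obtain ⟨hi, rfl⟩ := List.getElem?_eq_some_iff.mp h
  simp [catWord, hi]

theorem catWord_apply_of_length_le (u : List A) (v : ℕ → A) {i : ℕ} (hi : u.length ≤ i) :
    catWord u v i = v (i - u.length) := by
  simp [catWord, Nat.not_lt.mpr hi]

theorem catWord_zero_eq_of_head?_eq {t s : List A} (hne : t ≠ []) (h : t.head? = s.head?)
    (v v' : ℕ → A) : catWord t v 0 = catWord s v' 0 := by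
  obtain ⟨a, ha⟩ := Option.ne_none_iff_exists'.mp (List.head?_eq_none_iff.not.mpr hne)
  rw [List.head?_eq_getElem?] at ha h
  rw [List.head?_eq_getElem?, ha] at h
  rw [catWord_apply_of_getElem?_eq ha, catWord_apply_of_getElem?_eq h.symm]

@[simp]
theorem length_prefixOf (w : ℕ → A) (n : ℕ) : (prefixOf w n).length = n := by
  simp [prefixOf]

theorem getElem?_prefixOf {w : ℕ → A} {n i : ℕ} (hi : i < n) :
    (prefixOf w n)[i]? = some (w i) := by
  simp [prefixOf, hi]

theorem prefixOf_ne_nil (w : ℕ → A) {n : ℕ} (hn : n ≠ 0) : prefixOf w n ≠ [] := by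
  rw [← List.length_pos_iff, length_prefixOf]
  exact Nat.pos_of_ne_zero hn

theorem catWord_prefixOf_shift (w : ℕ → A) (n : ℕ) :
    catWord (prefixOf w n) (fun i => w (n + i)) = w := by
  funext i
  rcases lt_or_ge i n with hi | hi
  · exact catWord_apply_of_getElem?_eq (getElem?_prefixOf hi) _
  · rw [catWord_apply_of_length_le _ _ (by simpa using hi), length_prefixOf]
    congr 1
    omega

theorem prefixOf_catWord_prefixOf {w : ℕ → A} {n m : ℕ} (hnm : n ≤ m) (v : ℕ → A) :
    prefixOf (catWord (prefixOf w m) v) n = prefixOf w n := by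
  simp only [prefixOf, List.ofFn_inj]
  funext i
  exact catWord_apply_of_getElem?_eq (getElem?_prefixOf (by omega)) v

def IsBadPrefix (P : Set (ℕ → A)) (t : List A) : Prop :=
  ∀ v : ℕ → A, catWord t v ∉ P

theorem IsBadPrefix.prefixOf_mono {P : Set (ℕ → A)} {w : ℕ → A} {n m : ℕ}
    (h : IsBadPrefix P (prefixOf w n)) (hnm : n ≤ m) : IsBadPrefix P (prefixOf w m) := by
  intro v
  have h := h (fun i => catWord (prefixOf w m) v (n + i))
  rwa [← prefixOf_catWord_prefixOf hnm v, catWord_prefixOf_shift] at h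

theorem lt_length_of_getElem?_eq {u t : List A} {i j : ℕ} (h : u[i]? = t[j]?)
    (hi : i < u.length) : j < t.length := by
  by_contra! hj
  rw [List.getElem?_eq_none hj, List.getElem?_eq_none_iff] at h
  omega

-- The embedding is continued by a shift on the common tail `v`.
theorem FinSubword.subword_catWord {u t : List A} (h : FinSubword u t) (v : ℕ → A) :
    Subword (catWord u v) (catWord t v) := by
  obtain ⟨f, hf, hft⟩ := h
  refine ⟨fun i => if i < u.length then f i else t.length + (i - u.length), ?_, fun i => ?_⟩
  · refine strictMono_nat_of_lt_succ fun i => ?_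
    by_cases hi : i + 1 < u.length
    · simpa [hi, show i < u.length by omega] using hf (Nat.lt_succ_self i)
    by_cases hi' : i < u.length
    · simpa [hi, hi', show i + 1 - u.length = 0 by omega] using
        lt_length_of_getElem?_eq (hft i hi') hi'
    · simp only [hi, hi', if_false]
      omega
  by_cases hi : i < u.length
  · have hui : u[i]? = some u[i] := List.getElem?_eq_getElem hi
    simp only [hi, if_true]
    rw [catWord_apply_of_getElem?_eq hui,
      catWord_apply_of_getElem?_eq ((hft i hi).symm.trans hui)]
  · simp only [hi, if_false]
    rw [catWord_apply_of_length_le _ _ (by omega), catWord_apply_of_length_le _ _ (by omega)]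
    congr 1
    omega

end Words

/-- Preservation of detour-irreparable safety properties: if every finite trace
of system `B` is a subword (with matching first and last states) of some finite
trace of system `A`, every finite trace of `A` extends to an infinite trace of
`A`, and `A` satisfies the detour-irreparable safety property `P`, then `B`
satisfies `P`. -/
theorem preservation_detour_irreparable {St : Type*}
    (AFin BFin : Set (List St)) (AInf BInf : Set (ℕ → St))
    (P : Set (ℕ → St)) (hsafe : IsSafety P) (hdet : DetourIrreparable P)
    (hprefB : ∀ w ∈ BInf, ∀ n : ℕ, prefixOf w n ∈ BFin)
    (hlift : ∀ tB ∈ BFin, tB ≠ [] → ∃ tA ∈ AFin, FinSubword tB tA ∧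
      tA.head? = tB.head? ∧ tA.getLast? = tB.getLast?)
    (hext : ∀ tA ∈ AFin, ∃ v : ℕ → St, catWord tA v ∈ AInf)
    (hA : ∀ ρ ∈ AInf, ρ ∈ P) :
    ∀ ρ ∈ BInf, ρ ∈ P := by
  intro ρ hρ
  by_contra hρP
  obtain ⟨n, hn⟩ := hsafe ρ hρP
  have hbad : IsBadPrefix P (prefixOf ρ (n + 1)) := IsBadPrefix.prefixOf_mono hn n.le_succ
  have hne : prefixOf ρ (n + 1) ≠ [] := prefixOf_ne_nil ρ n.succ_ne_zero
  obtain ⟨tA, htA, hsub, hhead, -⟩ := hlift _ (hprefB ρ hρ _) hne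
  obtain ⟨v, hv⟩ := hext tA htA
  exact hdet _ _ (hbad v) (catWord_zero_eq_of_head?_eq hne hhead.symm v v)
    (hsub.subword_catWord v) (hA _ hv)
end

section
/- The property 'at most one process changes its local state between consecutive global states' is repairable through detours: for any infinite word u over global states (with at least two processes and at least two local states), there exists an infinite word w containing u as a subword with u(1) = w(1) such that in w every pair of consecutive states differs in at most one process component. -/
/-- The property `OneChanges` is repairable through detours: any infinite word
`u` over global states (with at least two processes and at least two local
states) is a subword, with matching first letter, of an infinite word `w` in
which at most one process changes its local state between consecutive global
states. -/
theorem oneChanges_repairable {Proc Sp : Type*} [Fintype Proc]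
    (hProc : 2 ≤ Fintype.card Proc) [Nontrivial Sp]
    (u : ℕ → Proc → Sp) :
    ∃ (w : ℕ → Proc → Sp) (f : ℕ → ℕ), StrictMono f ∧ f 0 = 0 ∧
      (∀ i, u i = w (f i)) ∧
      (∀ i p q, w i p ≠ w (i + 1) p → w i q ≠ w (i + 1) q → p = q) := by
  classical
  set n := Fintype.card Proc with hn
  have hn2 : 2 ≤ n := hProc
  have hnpos : 0 < n := by omega
  let c : Proc → ℕ := fun p => (Fintype.equivFin Proc p : ℕ)
  have hc : Function.Injective c := fun p q h =>
    (Fintype.equivFin Proc).injective (Fin.ext h)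
  have hclt : ∀ p, c p < n := fun p => (Fintype.equivFin Proc p).isLt
  set w : ℕ → Proc → Sp :=
    fun m p => if c p < m % n then u (m / n + 1) p else u (m / n) p with hw
  have key : ∀ m p, c p ≠ m % n → w m p = w (m + 1) p := by
    intro m p hp
    obtain ⟨i, k, hkn, hm⟩ : ∃ i k, k < n ∧ m = n * i + k :=
      ⟨m / n, m % n, Nat.mod_lt _ hnpos, (Nat.div_add_mod m n).symm⟩
    have hmod : m % n = k := by
      rw [hm, Nat.mul_add_mod, Nat.mod_eq_of_lt hkn]
    have hdiv : m / n = i := by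
      rw [hm, Nat.mul_add_div hnpos, Nat.div_eq_of_lt hkn, Nat.add_zero]
    rw [hmod] at hp
    by_cases h : k + 1 < n
    · have h0 : m + 1 = n * i + (k + 1) := by omega
      have h1 : (m + 1) % n = k + 1 := by
        rw [h0, Nat.mul_add_mod, Nat.mod_eq_of_lt h]
      have h2 : (m + 1) / n = i := by
        rw [h0, Nat.mul_add_div hnpos, Nat.div_eq_of_lt h, Nat.add_zero]
      simp only [hw, h1, h2, hmod, hdiv]
      rcases lt_trichotomy (c p) k with hlt | heq | hgt
      · rw [if_pos hlt, if_pos (by omega)]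
      · exact absurd heq hp
      · rw [if_neg (by omega), if_neg (by omega)]
    · have hkeq : k + 1 = n := by omega
      have haux : n * (i + 1) = n * i + n := by ring
      have h0 : m + 1 = n * (i + 1) := by omega
      have h1 : (m + 1) % n = 0 := by
        rw [h0, Nat.mul_mod_right]
      have h2 : (m + 1) / n = i + 1 := by
        rw [h0, Nat.mul_div_cancel_left _ hnpos]
      have hcp : c p < k := by have := hclt p; omega
      simp only [hw, h1, h2, hmod, hdiv]
      rw [if_pos hcp, if_neg (by omega)]
  refine ⟨w, fun i => i * n, ?_, by simp, ?_, ?_⟩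
  · intro a b hab
    exact (Nat.mul_lt_mul_right hnpos).mpr hab
  · intro i
    funext p
    simp only [hw, Nat.mul_mod_left, Nat.mul_div_cancel _ hnpos]
    rw [if_neg (by omega)]
  · intro m p q hp hq
    have hp' : c p = m % n := by
      by_contra h; exact hp (key m p h)
    have hq' : c q = m % n := by
      by_contra h; exact hq (key m q h)
    exact hc (hp'.trans hq'.symm)
end
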